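/- arXiv:1111.3058 — 5 statements merged into one kernel-verified Lean document; each statement's English description precedes it below -/
import Mathlib

section
/- For every natural number n ≥ 1 and every polynomial P of degree at most 2n−1, (1/π)∫_{-1}^1 P(x)/√(1−x²) dx = (1/n)∑_{k=1}^n P(cos((2k−1)π/(2n))). -/
open Real Polynomial Chebyshev

/-- Mehler's Chebyshev-type quadrature formula. -/
theorem mehler_quadrature (n : ℕ) (hn : 1 ≤ n) (P : Polynomial ℝ)
    (hP : P.natDegree ≤ 2 * n - 1) :
    (1 / π) * ∫ x in (-1 : ℝ)..1, P.eval x / Real.sqrt (1 - x ^ 2)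
      = (1 / (n : ℝ)) * ∑ k ∈ Finset.range n,
          P.eval (Real.cos ((2 * (k : ℝ) + 1) * π / (2 * n))) := by
  have hdeg : P.degree < 2 * n :=
    degree_le_natDegree.trans_lt (by exact_mod_cast (by omega : P.natDegree < 2 * n))
  have hquad := integral_eq_sumZeroes (by omega) hdeg
  simp only [integral_measureT, sqrt_inv, ← div_eq_mul_inv, sumZeroes, div_mul_eq_mul_div]
    at hquad
  rw [hquad]
  field_simp
end

section
/- The Chebyshev weight ρ(y) = 1/(π√(1−y²)) satisfies ρ(y) = −ρ(S_k(y))·S_k'(y) for all y ∈ (x_{k+1}, 1) and every k ≥ 0, where S_0(y) = −y, S_1(y) = √(1−y²), S_2(y) = (y+√(1−y²))/√2, and in general S_k is the reflection determined by P_{2^k}∘S_k = −P_{2^k}. Consequently ρ ∈ W_n for every n. -/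
open Real

noncomputable def xseq : ℕ → ℝ
  | 0 => -1
  | n + 1 => Real.sqrt ((1 + xseq n) / 2)
/-- `Q p` is the Chebyshev polynomial of degree `2^p`, the `p`-fold composite of `2x²-1`. -/
noncomputable def Q (p : ℕ) : ℝ → ℝ := (fun t : ℝ => 2 * t ^ 2 - 1)^[p]
/-- `S` is the reflection associated to `P_{2^k}` on `[x_{k+1}, 1]`. -/
def IsReflection (k : ℕ) (S : ℝ → ℝ) : Prop :=
  Set.BijOn S (Set.Icc (xseq (k + 1)) 1) (Set.Icc (xseq k) (xseq (k + 1))) ∧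
  ∀ y ∈ Set.Icc (xseq (k + 1)) 1, Q k (S y) = -(Q k y)
/-- The weight class `W_n` (relative to the reflections `S k`). -/
noncomputable def memW (S : ℕ → ℝ → ℝ) (n : ℕ) (ρ : ℝ → ℝ) : Prop :=
  (∀ x ∈ Set.Ioo (-1 : ℝ) 1, 0 ≤ ρ x) ∧
  ((∫ x in (-1 : ℝ)..1, ρ x) = 1) ∧
  ∀ k < n, ∀ y ∈ Set.Ioo (xseq (k + 1)) 1, ρ y = -(ρ (S k y) * deriv (S k) y)

/-- The Chebyshev weight. -/
noncomputable def cheb (y : ℝ) : ℝ := 1 / (π * Real.sqrt (1 - y ^ 2))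

/-!
In the angle variable `y = cos θ` we have `x_k = cos (π / 2 ^ k)` and `Q k (cos θ) = cos (2 ^ k θ)`,
so on `(x_{k+1}, 1)` every reflection is `cos θ ↦ cos (π / 2 ^ k - θ)`, by injectivity of `Q k`
on `[x_k, 1]`. The Chebyshev weight is `-(1/π) d(arccos)/dy`, i.e. the uniform density in `θ`,
and an affine map of `θ` with slope `-1` preserves it; its total mass is `∫₀^π dθ / π = 1`.
-/

open Set Filter Topology MeasureTheory

lemma pi_div_two_pow_le_pi (k : ℕ) : π / 2 ^ k ≤ π :=
  div_le_self pi_pos.le (one_le_pow₀ one_le_two)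

lemma xseq_eq_cos (k : ℕ) : xseq k = cos (π / 2 ^ k) := by
  induction k with
  | zero => simp [xseq]
  | succ k ih =>
    have h : π / 2 ^ (k + 1) = π / 2 ^ k / 2 := by rw [pow_succ, div_div]
    have hpos : 0 < π / 2 ^ k := by positivity
    rw [xseq, ih, h, cos_half (by linarith [pi_pos]) (pi_div_two_pow_le_pi k)]

lemma arccos_xseq (k : ℕ) : arccos (xseq k) = π / 2 ^ k := by
  rw [xseq_eq_cos, arccos_cos (by positivity) (pi_div_two_pow_le_pi k)]

lemma arccos_le_of_xseq_succ_le {k : ℕ} {y : ℝ} (hy : xseq (k + 1) ≤ y) :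
    arccos y ≤ π / 2 ^ k / 2 := by
  rw [div_div, ← pow_succ, ← arccos_xseq]
  exact arccos_le_arccos hy

lemma Q_cos (k : ℕ) (θ : ℝ) : Q k (cos θ) = cos (2 ^ k * θ) := by
  induction k generalizing θ with
  | zero => simp [Q]
  | succ k ih =>
    rw [Q, Function.iterate_succ_apply, ← cos_two_mul, ← Q, ih, pow_succ, mul_assoc]

lemma Q_eq_cos_mul_arccos (k : ℕ) {y : ℝ} (hy : y ∈ Icc (-1) 1) :
    Q k y = cos (2 ^ k * arccos y) := by
  rw [← Q_cos, cos_arccos hy.1 hy.2]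

lemma injOn_Q (k : ℕ) : InjOn (Q k) (Icc (xseq k) 1) := by
  have hmem : ∀ z ∈ Icc (xseq k) 1, z ∈ Icc (-1) 1 ∧ 2 ^ k * arccos z ∈ Icc 0 π := by
    intro z hz
    have hz₁ : -1 ≤ z := (xseq_eq_cos k ▸ neg_one_le_cos _).trans hz.1
    have hle : arccos z ≤ π / 2 ^ k := arccos_xseq k ▸ arccos_le_arccos hz.1
    refine ⟨⟨hz₁, hz.2⟩, mul_nonneg (by positivity) (arccos_nonneg z), ?_⟩
    calc 2 ^ k * arccos z ≤ 2 ^ k * (π / 2 ^ k) := by gcongr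
      _ = π := by field_simp
  intro z₁ hz₁ z₂ hz₂ hQ
  obtain ⟨hz₁', hθ₁⟩ := hmem z₁ hz₁
  obtain ⟨hz₂', hθ₂⟩ := hmem z₂ hz₂
  rw [Q_eq_cos_mul_arccos k hz₁', Q_eq_cos_mul_arccos k hz₂'] at hQ
  exact arccos_injOn hz₁' hz₂' (mul_left_cancel₀ (by positivity) (injOn_cos hθ₁ hθ₂ hQ))

lemma IsReflection.eqOn {k : ℕ} {S : ℝ → ℝ} (hS : IsReflection k S) :
    EqOn S (fun y => cos (π / 2 ^ k - arccos y)) (Icc (xseq (k + 1)) 1) := by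
  intro y hy
  have hθ := arccos_le_of_xseq_succ_le hy.1
  have hx : 0 ≤ xseq (k + 1) := sqrt_nonneg _
  have ha : 0 < π / 2 ^ k := by positivity
  have hy₁ : -1 ≤ y := by linarith [hy.1]
  have hmem : cos (π / 2 ^ k - arccos y) ∈ Icc (xseq k) 1 :=
    ⟨xseq_eq_cos k ▸ cos_le_cos_of_nonneg_of_le_pi (by linarith) (pi_div_two_pow_le_pi k)
      (by linarith [arccos_nonneg y]), cos_le_one _⟩
  have hQ : Q k (cos (π / 2 ^ k - arccos y)) = -Q k y := by
    rw [Q_cos, Q_eq_cos_mul_arccos k ⟨hy₁, hy.2⟩, mul_sub, mul_div_cancel₀ _ (by positivity),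
      cos_pi_sub]
  have hSy : S y ∈ Icc (xseq k) 1 :=
    Icc_subset_Icc_right (xseq_eq_cos (k + 1) ▸ cos_le_one _) (hS.1.mapsTo hy)
  exact injOn_Q k hSy hmem ((hS.2 y hy).trans hQ.symm)

lemma cheb_cos {t : ℝ} (h₀ : 0 ≤ t) (hπ : t ≤ π) : cheb (cos t) = 1 / (π * sin t) := by
  rw [cheb, sin_eq_sqrt_one_sub_cos_sq h₀ hπ]

lemma cheb_eq_neg_cheb_comp_mul_deriv {S : ℝ → ℝ} {a y : ℝ}
    (hS : S =ᶠ[𝓝 y] fun z => cos (a - arccos z)) (hy : y ∈ Ioo (-1) 1)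
    (h₀ : arccos y < a) (hπ : a - arccos y < π) :
    cheb y = -(cheb (S y) * deriv S y) := by
  have hd : HasDerivAt (fun z => cos (a - arccos z))
      (-sin (a - arccos y) * -(-(1 / √(1 - y ^ 2)))) y :=
    ((hasDerivAt_arccos hy.1.ne' hy.2.ne).const_sub a).cos
  have hsin : 0 < sin (a - arccos y) := sin_pos_of_pos_of_lt_pi (by linarith) hπ
  have hsqrt : 0 < √(1 - y ^ 2) := sqrt_pos.2 (by nlinarith [hy.1, hy.2])
  rw [hS.eq_of_nhds, hS.deriv_eq, hd.deriv, cheb_cos (by linarith) hπ.le, cheb]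
  field_simp

lemma IsReflection.cheb_eq {k : ℕ} {S : ℝ → ℝ} (hS : IsReflection k S) :
    ∀ y ∈ Ioo (xseq (k + 1)) 1, cheb y = -(cheb (S y) * deriv S y) := by
  intro y hy
  have hθ := arccos_le_of_xseq_succ_le hy.1.le
  have hx : 0 ≤ xseq (k + 1) := sqrt_nonneg _
  have ha : 0 < π / 2 ^ k := by positivity
  refine cheb_eq_neg_cheb_comp_mul_deriv
    (eventuallyEq_of_mem (Icc_mem_nhds hy.1 hy.2) hS.eqOn) ⟨by linarith [hy.1], hy.2⟩
    (by linarith) ?_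
  linarith [arccos_pos.2 hy.2, pi_div_two_pow_le_pi k]

lemma cheb_nonneg (y : ℝ) : 0 ≤ cheb y := by
  rw [cheb]; positivity

lemma integral_cheb : ∫ x in (-1 : ℝ)..1, cheb x = 1 := by
  have hsubst := integral_image_eq_integral_abs_deriv_smul measurableSet_Icc
    (fun x _ => (hasDerivAt_cos x).hasDerivWithinAt) injOn_cos cheb
  have hconst : EqOn (fun x => |-sin x| • cheb (cos x)) (fun _ => π⁻¹) (Ioo 0 π) := by
    intro x hx
    have hsin := sin_pos_of_pos_of_lt_pi hx.1 hx.2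
    simp only [smul_eq_mul, abs_neg, abs_of_pos hsin, cheb_cos hx.1.le hx.2.le]
    field_simp
  rw [intervalIntegral.integral_of_le (by norm_num), ← integral_Icc_eq_integral_Ioc,
    ← bijOn_cos.image_eq, hsubst, integral_Icc_eq_integral_Ioo,
    setIntegral_congr_fun measurableSet_Ioo hconst, setIntegral_const, measureReal_def,
    volume_Ioo, sub_zero, ENNReal.toReal_ofReal pi_pos.le, smul_eq_mul, mul_inv_cancel₀ pi_ne_zero]

/-- The Chebyshev weight satisfies `ρ(y) = -ρ(S_k(y))·S_k'(y)` on `(x_{k+1},1)` for every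
reflection `S_k`; consequently it belongs to `W_n` for every `n`. -/
theorem cheb_mem_W :
    (∀ (k : ℕ) (S : ℝ → ℝ), IsReflection k S →
      ∀ y ∈ Set.Ioo (xseq (k + 1)) 1, cheb y = -(cheb (S y) * deriv S y)) ∧
    (∀ (n : ℕ) (S : ℕ → ℝ → ℝ), (∀ k < n, IsReflection k (S k)) → memW S n cheb) :=
  ⟨fun _ _ hS => hS.cheb_eq,
    fun _ _ hS => ⟨fun x _ => cheb_nonneg x, integral_cheb, fun k hk => (hS k hk).cheb_eq⟩⟩
end

section
/- If ρ ∈ W_n, then ∫_{x_n}^1 ρ(y) dy = 2^{−n}. -/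
/-!
Writing `y = cos θ`, we have `x_k = cos (π / 2^k)` and `Q k (cos θ) = cos (2^k θ)`. Since `Q k`
is injective on `[x_k, 1]`, any reflection `S_k` must be `θ ↦ π / 2^k - θ` in the angle
variable, a decreasing bijection `(x_{k+1}, 1) → (x_k, x_{k+1})`. The change of variables along
it, together with the reflection identity, gives `∫_{x_k}^{x_{k+1}} ρ = ∫_{x_{k+1}}^1 ρ`: each
step halves the tail integral, starting from `∫_{-1}^1 ρ = 1`.
-/

open Real Set MeasureTheory

namespace ChebyshevReflection

noncomputable def angle (k : ℕ) : ℝ := π / 2 ^ k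

lemma angle_pos (k : ℕ) : 0 < angle k := by unfold angle; positivity

lemma angle_le_pi (k : ℕ) : angle k ≤ π := div_le_self pi_pos.le (one_le_pow₀ one_le_two)

lemma angle_succ (k : ℕ) : angle (k + 1) = angle k / 2 := by
  unfold angle; rw [pow_succ]; ring

lemma two_pow_mul_angle (k : ℕ) : 2 ^ k * angle k = π := by
  unfold angle; field_simp

lemma xseq_eq_cos_angle (k : ℕ) : xseq k = cos (angle k) := by
  induction k with
  | zero => simp [xseq, angle]
  | succ k ih =>
    rw [xseq, ih, angle_succ, cos_half (by linarith [angle_pos k, pi_pos]) (angle_le_pi k)]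

lemma xseq_mem_Icc (k : ℕ) : xseq k ∈ Icc (-1 : ℝ) 1 := by
  rw [xseq_eq_cos_angle]
  exact ⟨neg_one_le_cos _, cos_le_one _⟩

lemma xseq_le_succ (k : ℕ) : xseq k ≤ xseq (k + 1) := by
  rw [xseq_eq_cos_angle, xseq_eq_cos_angle, angle_succ]
  exact cos_le_cos_of_nonneg_of_le_pi (by linarith [angle_pos k]) (angle_le_pi k)
    (by linarith [angle_pos k])

lemma Q_cos (p : ℕ) (θ : ℝ) : Q p (cos θ) = cos (2 ^ p * θ) := by
  induction p generalizing θ with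
  | zero => simp [Q]
  | succ p ih =>
    rw [Q, Function.iterate_succ_apply, ← cos_two_mul, ← Q, ih, pow_succ, mul_assoc]

lemma mapsTo_arccos_Ioo {a b : ℝ} (ha : a ∈ Icc 0 π) (hb : b ∈ Icc 0 π) :
    MapsTo arccos (Ioo (cos b) (cos a)) (Ioo a b) := fun y hy => by
  have hb₁ : -1 ≤ cos b := neg_one_le_cos b
  have ha₁ : cos a ≤ 1 := cos_le_one a
  constructor
  · simpa only [arccos_cos ha.1 ha.2] using arccos_lt_arccos (by linarith [hy.1]) hy.2 ha₁
  · simpa only [arccos_cos hb.1 hb.2] using arccos_lt_arccos hb₁ hy.1 (by linarith [hy.2])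

lemma mapsTo_cos_Ioo {a b : ℝ} (ha : 0 ≤ a) (hb : b ≤ π) :
    MapsTo cos (Ioo a b) (Ioo (cos b) (cos a)) := fun _ hθ =>
  ⟨cos_lt_cos_of_nonneg_of_le_pi (ha.trans hθ.1.le) hb hθ.2,
    cos_lt_cos_of_nonneg_of_le_pi ha (hθ.2.le.trans hb) hθ.1⟩

lemma arccos_le_angle {k : ℕ} {y : ℝ} (hy : xseq k ≤ y) : arccos y ≤ angle k := by
  simpa only [xseq_eq_cos_angle, arccos_cos (angle_pos k).le (angle_le_pi k)]
    using arccos_le_arccos hy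

/-- On `[x_k, 1] = cos '' [0, π / 2^k]` the angle `2^k θ` stays in `[0, π]`, where `cos` is
injective. -/
lemma Q_injOn (k : ℕ) : InjOn (Q k) (Icc (xseq k) 1) := by
  have hmem : ∀ y ∈ Icc (xseq k) 1, y ∈ Icc (-1 : ℝ) 1 ∧ 2 ^ k * arccos y ∈ Icc 0 π := by
    intro y hy
    refine ⟨⟨(xseq_mem_Icc k).1.trans hy.1, hy.2⟩,
      mul_nonneg (by positivity) (arccos_nonneg y), ?_⟩
    rw [← two_pow_mul_angle k]
    gcongr
    exact arccos_le_angle hy.1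
  intro u hu v hv huv
  obtain ⟨hu₁, hu₂⟩ := hmem u hu
  obtain ⟨hv₁, hv₂⟩ := hmem v hv
  rw [← cos_arccos hu₁.1 hu₁.2, ← cos_arccos hv₁.1 hv₁.2, Q_cos, Q_cos] at huv
  exact arccos_injOn hu₁ hv₁ (mul_left_cancel₀ (by positivity) (injOn_cos hu₂ hv₂ huv))

noncomputable def reflection (k : ℕ) (y : ℝ) : ℝ := cos (angle k - arccos y)

lemma Q_reflection (k : ℕ) {y : ℝ} (hy : y ∈ Icc (-1) 1) :
    Q k (reflection k y) = -Q k y := by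
  rw [reflection, Q_cos, mul_sub, two_pow_mul_angle, cos_pi_sub, ← Q_cos, cos_arccos hy.1 hy.2]

lemma reflection_reflection (k : ℕ) {y : ℝ} (hy : y ∈ Ioo (xseq k) 1) :
    reflection k (reflection k y) = y := by
  have hy₁ : -1 ≤ y := (xseq_mem_Icc k).1.trans hy.1.le
  have hθ : arccos y ≤ angle k := arccos_le_angle hy.1.le
  rw [reflection, reflection, arccos_cos (sub_nonneg.2 hθ)
    (by linarith [arccos_nonneg y, angle_le_pi k]), sub_sub_cancel, cos_arccos hy₁ hy.2.le]

lemma mapsTo_reflection (k : ℕ) :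
    MapsTo (reflection k) (Ioo (xseq (k + 1)) 1) (Ioo (xseq k) (xseq (k + 1))) := by
  intro y hy
  have hA := angle_pos k
  have hAπ := angle_le_pi k
  rw [xseq_eq_cos_angle, angle_succ, ← cos_zero] at hy
  have hθ := mapsTo_arccos_Ioo ⟨le_rfl, pi_pos.le⟩ ⟨by linarith, by linarith⟩ hy
  rw [xseq_eq_cos_angle, xseq_eq_cos_angle, angle_succ]
  exact mapsTo_cos_Ioo (by linarith) hAπ ⟨by linarith [hθ.2], by linarith [hθ.1]⟩

lemma mapsTo_reflection_symm (k : ℕ) :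
    MapsTo (reflection k) (Ioo (xseq k) (xseq (k + 1))) (Ioo (xseq (k + 1)) 1) := by
  intro y hy
  have hA := angle_pos k
  have hAπ := angle_le_pi k
  rw [xseq_eq_cos_angle, xseq_eq_cos_angle, angle_succ] at hy
  have hθ := mapsTo_arccos_Ioo ⟨by linarith, by linarith⟩ ⟨hA.le, hAπ⟩ hy
  rw [xseq_eq_cos_angle, angle_succ, ← cos_zero]
  exact mapsTo_cos_Ioo le_rfl (by linarith) ⟨by linarith [hθ.2], by linarith [hθ.1]⟩

lemma bijOn_reflection (k : ℕ) :
    BijOn (reflection k) (Ioo (xseq (k + 1)) 1) (Ioo (xseq k) (xseq (k + 1))) := by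
  have hsub₁ : Ioo (xseq (k + 1)) 1 ⊆ Ioo (xseq k) 1 := Ioo_subset_Ioo_left (xseq_le_succ k)
  have hsub₂ : Ioo (xseq k) (xseq (k + 1)) ⊆ Ioo (xseq k) 1 :=
    Ioo_subset_Ioo_right (xseq_mem_Icc (k + 1)).2
  exact InvOn.bijOn ⟨fun y hy => reflection_reflection k (hsub₁ hy),
    fun y hy => reflection_reflection k (hsub₂ hy)⟩
    (mapsTo_reflection k) (mapsTo_reflection_symm k)

lemma eqOn_reflection {k : ℕ} {S : ℝ → ℝ} (hS : IsReflection k S) :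
    EqOn S (reflection k) (Ioo (xseq (k + 1)) 1) := by
  intro y hy
  have hyIcc : y ∈ Icc (xseq (k + 1)) 1 := Ioo_subset_Icc_self hy
  have hsub : Icc (xseq k) (xseq (k + 1)) ⊆ Icc (xseq k) 1 :=
    Icc_subset_Icc_right (xseq_mem_Icc (k + 1)).2
  refine Q_injOn k (hsub (hS.1.mapsTo hyIcc))
    (hsub (Ioo_subset_Icc_self (mapsTo_reflection k hy))) ?_
  rw [hS.2 y hyIcc, Q_reflection k ⟨(xseq_mem_Icc (k + 1)).1.trans hy.1.le, hy.2.le⟩]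

lemma hasDerivAt_reflection (k : ℕ) {y : ℝ} (hy : y ∈ Ioo (-1) 1) :
    HasDerivAt (reflection k) (-sin (angle k - arccos y) / √(1 - y ^ 2)) y :=
  ((hasDerivAt_arccos hy.1.ne' hy.2.ne).const_sub (angle k)).cos.congr_deriv (by ring)

lemma integral_eq_of_reflection {k : ℕ} {S : ℝ → ℝ} (hS : IsReflection k S) {ρ : ℝ → ℝ}
    (hρ : ∀ y ∈ Ioo (xseq (k + 1)) 1, ρ y = -(ρ (S y) * deriv S y)) :
    ∫ x in xseq k..xseq (k + 1), ρ x = ∫ x in xseq (k + 1)..1, ρ x := by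
  have hIoo : ∀ y ∈ Ioo (xseq (k + 1)) 1, y ∈ Ioo (-1 : ℝ) 1 :=
    fun y hy => ⟨(xseq_mem_Icc _).1.trans_lt hy.1, hy.2⟩
  rw [intervalIntegral.integral_of_le (xseq_le_succ k),
    intervalIntegral.integral_of_le (xseq_mem_Icc _).2, integral_Ioc_eq_integral_Ioo,
    integral_Ioc_eq_integral_Ioo, ← (bijOn_reflection k).image_eq,
    integral_image_eq_integral_abs_deriv_smul measurableSet_Ioo
      (fun y hy => (hasDerivAt_reflection k (hIoo y hy)).hasDerivWithinAt)
      (bijOn_reflection k).injOn]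
  refine setIntegral_congr_fun measurableSet_Ioo fun y hy => ?_
  have hderiv : deriv S y = -sin (angle k - arccos y) / √(1 - y ^ 2) := by
    rw [((eqOn_reflection hS).eventuallyEq_of_mem (isOpen_Ioo.mem_nhds hy)).deriv_eq,
      (hasDerivAt_reflection k (hIoo y hy)).deriv]
  have hsin : 0 ≤ sin (angle k - arccos y) :=
    sin_nonneg_of_nonneg_of_le_pi
      (sub_nonneg.2 (arccos_le_angle ((xseq_le_succ k).trans hy.1.le)))
      (by linarith [arccos_nonneg y, angle_le_pi k])
  rw [hρ y hy, eqOn_reflection hS hy, hderiv, smul_eq_mul, abs_of_nonpos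
    (div_nonpos_of_nonpos_of_nonneg (neg_nonpos.2 hsin) (sqrt_nonneg _))]
  ring

end ChebyshevReflection

open ChebyshevReflection

/-- If `ρ ∈ W_n` then `∫_{x_n}^1 ρ = 2^{-n}`. -/
theorem integral_tail_of_memW (n : ℕ) (S : ℕ → ℝ → ℝ)
    (hS : ∀ k < n, IsReflection k (S k)) (ρ : ℝ → ℝ) (hρ : memW S n ρ) :
    (∫ y in (xseq n)..1, ρ y) = 1 / 2 ^ n := by
  obtain ⟨-, hone, hrefl⟩ := hρ
  have hint : IntervalIntegrable ρ volume (-1) 1 :=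
    intervalIntegral.intervalIntegrable_of_integral_ne_zero (by simp [hone])
  have hint_of_mem : ∀ {a b}, a ∈ Icc (-1 : ℝ) 1 → b ∈ Icc (-1 : ℝ) 1 →
      IntervalIntegrable ρ volume a b := fun ha hb =>
    hint.mono_set (uIcc_subset_uIcc (Icc_subset_uIcc ha) (Icc_subset_uIcc hb))
  suffices ∀ k ≤ n, ∫ y in xseq k..1, ρ y = 1 / 2 ^ k from this n le_rfl
  intro k hk
  induction k with
  | zero => simpa [xseq] using hone
  | succ k ih =>
    have hsplit := intervalIntegral.integral_add_adjacent_intervals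
      (hint_of_mem (xseq_mem_Icc k) (xseq_mem_Icc (k + 1)))
      (hint_of_mem (xseq_mem_Icc (k + 1)) (right_mem_Icc.2 (by norm_num)))
    rw [integral_eq_of_reflection (hS k hk) (hrefl k hk), ih (k.le_succ.trans hk)] at hsplit
    rw [pow_succ, ← div_div, ← hsplit]
    ring
end

section
/- Let ρ ≥ 0 on [-1,1] with ∫_{-1}^1 ρ = 1, ρ(y) = ρ(−y) for all y, and ρ(y) = ρ(√(1−y²))·y/√(1−y²) for y ∈ (0,1). Then for every integrable function f: ∫_{-1}^1 f(x)ρ(x)dx = 4∫_{1/√2}^1 ((f(y) + f(−y) + f(√(1−y²)) + f(−√(1−y²)))/4)·ρ(y)dy. -/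
/-!
Fold `[-1, 1]` onto `[0, 1]` using the evenness of `ρ`, and split `[0, 1]` at `1 / √2`. The
involution `y ↦ √(1 - y²)` of `[0, 1]` exchanges `(0, 1 / √2)` and `(1 / √2, 1)`, and its Jacobian
`y / √(1 - y²)` is exactly the factor in the reflection identity for `ρ`; so the substitution
turns `∫₀^{1/√2} g ρ` into `∫_{1/√2}^1 g(√(1 - y²)) ρ(y) dy`, and the four terms line up.
-/

open MeasureTheory Set
open scoped Interval

section FoldAtZero

variable {E : Type*} [NormedAddCommGroup E] {f : ℝ → E} {a : ℝ}

theorem IntervalIntegrable.left_of_neg_self (hf : IntervalIntegrable f volume (-a) a) :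
    IntervalIntegrable f volume (-a) 0 :=
  hf.mono_set (uIcc_subset_uIcc left_mem_uIcc (by simp [mem_uIcc, le_total]))

theorem IntervalIntegrable.right_of_neg_self (hf : IntervalIntegrable f volume (-a) a) :
    IntervalIntegrable f volume 0 a :=
  hf.mono_set (uIcc_subset_uIcc (by simp [mem_uIcc, le_total]) right_mem_uIcc)

theorem IntervalIntegrable.comp_neg_of_neg_self (hf : IntervalIntegrable f volume (-a) a) :
    IntervalIntegrable (fun x => f (-x)) volume 0 a := by
  simpa using ((IntervalIntegrable.iff_comp_neg (f := f)).mp hf.left_of_neg_self).symm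

theorem IntervalIntegrable.add_comp_neg (hf : IntervalIntegrable f volume (-a) a) :
    IntervalIntegrable (fun x => f x + f (-x)) volume 0 a :=
  hf.right_of_neg_self.add hf.comp_neg_of_neg_self

theorem intervalIntegral.integral_neg_self_eq_integral_add_comp_neg [NormedSpace ℝ E]
    (hf : IntervalIntegrable f volume (-a) a) :
    ∫ x in -a..a, f x = ∫ x in 0..a, (f x + f (-x)) := by
  rw [← integral_add_adjacent_intervals hf.left_of_neg_self hf.right_of_neg_self, add_comm,
    integral_add hf.right_of_neg_self hf.comp_neg_of_neg_self, integral_comp_neg, neg_zero]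

end FoldAtZero

section SqrtOneSubSq

variable {a b : ℝ}

theorem strictAntiOn_sqrt_one_sub_sq : StrictAntiOn (fun x : ℝ => √(1 - x ^ 2)) (Icc 0 1) :=
  fun x hx y hy hxy => Real.sqrt_lt_sqrt (by nlinarith [hy.2, hx.1]) (by nlinarith [hx.1])

theorem hasDerivAt_sqrt_one_sub_sq {x : ℝ} (hx : x ∈ Ioo (-1) 1) :
    HasDerivAt (fun x : ℝ => √(1 - x ^ 2)) (-(x / √(1 - x ^ 2))) x := by
  have hpos : 0 < 1 - x ^ 2 := by nlinarith [hx.1, hx.2]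
  convert ((hasDerivAt_pow 2 x).const_sub 1).sqrt hpos.ne' using 1
  field_simp
  ring

theorem image_sqrt_one_sub_sq_Ioo (ha : 0 ≤ a) (hab : a ≤ b) (hb : b ≤ 1) :
    (fun x : ℝ => √(1 - x ^ 2)) '' Ioo a b = Ioo √(1 - b ^ 2) √(1 - a ^ 2) :=
  ContinuousOn.image_Ioo_of_strictAntiOn hab (by fun_prop)
    (strictAntiOn_sqrt_one_sub_sq.mono (Icc_subset_Icc ha hb))

variable {E : Type*} [NormedAddCommGroup E] [NormedSpace ℝ E]

theorem hasDerivWithinAt_sqrt_one_sub_sq_Ioo (ha : 0 ≤ a) (hb : b ≤ 1) :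
    ∀ x ∈ Ioo a b, HasDerivWithinAt (fun x : ℝ => √(1 - x ^ 2)) (-(x / √(1 - x ^ 2))) (Ioo a b) x :=
  fun x hx => (hasDerivAt_sqrt_one_sub_sq ⟨by linarith [hx.1], hx.2.trans_le hb⟩).hasDerivWithinAt

theorem antitoneOn_sqrt_one_sub_sq_Ioo (ha : 0 ≤ a) (hb : b ≤ 1) :
    AntitoneOn (fun x : ℝ => √(1 - x ^ 2)) (Ioo a b) :=
  strictAntiOn_sqrt_one_sub_sq.antitoneOn.mono fun _ hx => ⟨ha.trans hx.1.le, hx.2.le.trans hb⟩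

theorem integral_Ioo_sqrt_one_sub_sq (ha : 0 ≤ a) (hab : a ≤ b) (hb : b ≤ 1) (g : ℝ → E) :
    ∫ x in Ioo √(1 - b ^ 2) √(1 - a ^ 2), g x
      = ∫ y in Ioo a b, (y / √(1 - y ^ 2)) • g √(1 - y ^ 2) := by
  rw [← image_sqrt_one_sub_sq_Ioo ha hab hb, integral_image_eq_integral_deriv_smul_of_antitoneOn
    measurableSet_Ioo (hasDerivWithinAt_sqrt_one_sub_sq_Ioo ha hb)
    (antitoneOn_sqrt_one_sub_sq_Ioo ha hb)]
  simp only [neg_neg]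

theorem integrableOn_Ioo_sqrt_one_sub_sq_iff (ha : 0 ≤ a) (hab : a ≤ b) (hb : b ≤ 1)
    (g : ℝ → E) :
    IntegrableOn g (Ioo √(1 - b ^ 2) √(1 - a ^ 2))
      ↔ IntegrableOn (fun y => (y / √(1 - y ^ 2)) • g √(1 - y ^ 2)) (Ioo a b) := by
  rw [← image_sqrt_one_sub_sq_Ioo ha hab hb,
    integrableOn_image_iff_integrableOn_deriv_smul_of_antitoneOn measurableSet_Ioo
    (hasDerivWithinAt_sqrt_one_sub_sq_Ioo ha hb) (antitoneOn_sqrt_one_sub_sq_Ioo ha hb)]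
  simp only [neg_neg]

theorem Ioo_sqrt_one_sub_sq_one_div_sqrt_two :
    Ioo √(1 - 1 ^ 2) √(1 - (1 / √2) ^ 2) = Ioo (0 : ℝ) (1 / √2) := by
  rw [div_pow, one_pow, Real.sq_sqrt zero_le_two, show (1 : ℝ) - 1 / 2 = 2⁻¹ by norm_num,
    Real.sqrt_inv, one_div, sub_self, Real.sqrt_zero]

end SqrtOneSubSq

theorem one_div_sqrt_two_mem_Ioo : 1 / √2 ∈ Ioo (0 : ℝ) 1 :=
  ⟨by positivity, (div_lt_one (by positivity)).2 Real.one_lt_sqrt_two⟩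

section EvenWeight

variable {ρ f : ℝ → ℝ} {a : ℝ}

theorem eqOn_add_comp_neg_mul_of_even (ha : 0 ≤ a) (hsym : ∀ y ∈ Icc (-a) a, ρ y = ρ (-y)) :
    EqOn (fun x => f x * ρ x + f (-x) * ρ (-x)) (fun x => (f x + f (-x)) * ρ x) [[0, a]] := by
  intro x hx
  rw [uIcc_of_le ha] at hx
  simp only [← hsym x ⟨by linarith [hx.1], hx.2⟩]
  ring

theorem IntervalIntegrable.add_comp_neg_mul_of_even (ha : 0 ≤ a)
    (hsym : ∀ y ∈ Icc (-a) a, ρ y = ρ (-y))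
    (hfρ : IntervalIntegrable (fun x => f x * ρ x) volume (-a) a) :
    IntervalIntegrable (fun x => (f x + f (-x)) * ρ x) volume 0 a :=
  hfρ.add_comp_neg.congr ((eqOn_add_comp_neg_mul_of_even ha hsym).mono uIoc_subset_uIcc)

theorem integral_mul_eq_integral_add_comp_neg_mul_of_even (ha : 0 ≤ a)
    (hsym : ∀ y ∈ Icc (-a) a, ρ y = ρ (-y))
    (hfρ : IntervalIntegrable (fun x => f x * ρ x) volume (-a) a) :
    ∫ x in -a..a, f x * ρ x = ∫ x in 0..a, (f x + f (-x)) * ρ x := by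
  rw [intervalIntegral.integral_neg_self_eq_integral_add_comp_neg hfρ]
  exact intervalIntegral.integral_congr (eqOn_add_comp_neg_mul_of_even ha hsym)

end EvenWeight

section ReflectionWeight

variable {ρ : ℝ → ℝ}

theorem eqOn_smul_comp_sqrt_one_sub_sq_mul_of_reflection
    (hrefl : ∀ y ∈ Ioo (0 : ℝ) 1, ρ y = ρ √(1 - y ^ 2) * y / √(1 - y ^ 2)) (g : ℝ → ℝ) :
    EqOn (fun y => (y / √(1 - y ^ 2)) • (g √(1 - y ^ 2) * ρ √(1 - y ^ 2)))
      (fun y => g √(1 - y ^ 2) * ρ y) (Ioo 0 1) := by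
  intro y hy
  simp only [smul_eq_mul, hrefl y hy]
  ring

theorem integral_mul_eq_integral_comp_sqrt_one_sub_sq_mul_of_reflection
    (hrefl : ∀ y ∈ Ioo (0 : ℝ) 1, ρ y = ρ √(1 - y ^ 2) * y / √(1 - y ^ 2)) (g : ℝ → ℝ) :
    ∫ x in 0..1 / √2, g x * ρ x = ∫ y in 1 / √2..1, g √(1 - y ^ 2) * ρ y := by
  obtain ⟨hc0, hc1⟩ := one_div_sqrt_two_mem_Ioo
  have hcov := integral_Ioo_sqrt_one_sub_sq hc0.le hc1.le le_rfl (fun x => g x * ρ x)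
  rw [Ioo_sqrt_one_sub_sq_one_div_sqrt_two] at hcov
  rw [intervalIntegral.integral_of_le hc0.le, intervalIntegral.integral_of_le hc1.le,
    integral_Ioc_eq_integral_Ioo, integral_Ioc_eq_integral_Ioo, hcov]
  exact setIntegral_congr_fun measurableSet_Ioo
    ((eqOn_smul_comp_sqrt_one_sub_sq_mul_of_reflection hrefl g).mono (Ioo_subset_Ioo_left hc0.le))

theorem IntervalIntegrable.comp_sqrt_one_sub_sq_mul_of_reflection
    (hrefl : ∀ y ∈ Ioo (0 : ℝ) 1, ρ y = ρ √(1 - y ^ 2) * y / √(1 - y ^ 2)) {g : ℝ → ℝ}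
    (hg : IntervalIntegrable (fun x => g x * ρ x) volume 0 (1 / √2)) :
    IntervalIntegrable (fun y => g √(1 - y ^ 2) * ρ y) volume (1 / √2) 1 := by
  obtain ⟨hc0, hc1⟩ := one_div_sqrt_two_mem_Ioo
  rw [intervalIntegrable_iff_integrableOn_Ioo_of_le hc0.le] at hg
  rw [intervalIntegrable_iff_integrableOn_Ioo_of_le hc1.le]
  have hcov := integrableOn_Ioo_sqrt_one_sub_sq_iff hc0.le hc1.le le_rfl (fun x => g x * ρ x)
  rw [Ioo_sqrt_one_sub_sq_one_div_sqrt_two] at hcov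
  exact (hcov.1 hg).congr_fun
    ((eqOn_smul_comp_sqrt_one_sub_sq_mul_of_reflection hrefl g).mono (Ioo_subset_Ioo_left hc0.le))
    measurableSet_Ioo

end ReflectionWeight

theorem W2_weight_identity_general (ρ f : ℝ → ℝ)
    (hsym : ∀ y ∈ Set.Icc (-1 : ℝ) 1, ρ y = ρ (-y))
    (hrefl : ∀ y ∈ Set.Ioo (0 : ℝ) 1,
      ρ y = ρ (Real.sqrt (1 - y ^ 2)) * y / Real.sqrt (1 - y ^ 2))
    (hfρ : IntegrableOn (fun x => f x * ρ x) (Set.Icc (-1 : ℝ) 1)) :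
    (∫ x in (-1 : ℝ)..1, f x * ρ x)
      = 4 * ∫ y in (1 / Real.sqrt 2 : ℝ)..1,
          ((f y + f (-y) + f (Real.sqrt (1 - y ^ 2)) + f (-(Real.sqrt (1 - y ^ 2)))) / 4)
            * ρ y := by
  obtain ⟨hc0, hc1⟩ := one_div_sqrt_two_mem_Ioo
  have hfρ' : IntervalIntegrable (fun x => f x * ρ x) volume (-1) 1 :=
    (intervalIntegrable_iff_integrableOn_Icc_of_le (by norm_num)).2 hfρ
  have hfold := hfρ'.add_comp_neg_mul_of_even zero_le_one hsym
  have hlow := hfold.mono_set (uIcc_subset_uIcc left_mem_uIcc (mem_uIcc_of_le hc0.le hc1.le))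
  have hhigh := hfold.mono_set (uIcc_subset_uIcc (mem_uIcc_of_le hc0.le hc1.le) right_mem_uIcc)
  rw [integral_mul_eq_integral_add_comp_neg_mul_of_even zero_le_one hsym hfρ',
    ← intervalIntegral.integral_add_adjacent_intervals hlow hhigh,
    integral_mul_eq_integral_comp_sqrt_one_sub_sq_mul_of_reflection hrefl,
    ← intervalIntegral.integral_add (hlow.comp_sqrt_one_sub_sq_mul_of_reflection hrefl) hhigh,
    ← intervalIntegral.integral_const_mul]
  exact intervalIntegral.integral_congr fun y _ => by ring

/-- The case `n = 2`: for `ρ ∈ W_2` (symmetric and reflection-invariant for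
`S_1(y) = √(1-y²)`), `∫_{-1}^1 f ρ = 4 ∫_{1/√2}^1 (R_1 ∘ R_0)(f) ρ`. -/
theorem W2_weight_identity (ρ f : ℝ → ℝ)
    (hρint : IntegrableOn ρ (Set.Icc (-1 : ℝ) 1))
    (hρ0 : ∀ x ∈ Set.Icc (-1 : ℝ) 1, 0 ≤ ρ x)
    (hρ1 : (∫ x in (-1 : ℝ)..1, ρ x) = 1)
    (hsym : ∀ y ∈ Set.Icc (-1 : ℝ) 1, ρ y = ρ (-y))
    (hrefl : ∀ y ∈ Set.Ioo (0 : ℝ) 1,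
      ρ y = ρ (Real.sqrt (1 - y ^ 2)) * y / Real.sqrt (1 - y ^ 2))
    (hf : IntegrableOn f (Set.Icc (-1 : ℝ) 1))
    (hfρ : IntegrableOn (fun x => f x * ρ x) (Set.Icc (-1 : ℝ) 1)) :
    (∫ x in (-1 : ℝ)..1, f x * ρ x)
      = 4 * ∫ y in (1 / Real.sqrt 2 : ℝ)..1,
          ((f y + f (-y) + f (Real.sqrt (1 - y ^ 2)) + f (-(Real.sqrt (1 - y ^ 2)))) / 4)
            * ρ y :=
  W2_weight_identity_general ρ f hsym hrefl hfρ
end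

section
/- Let ρ ∈ W_n and let X = {t_1 < t_2 < … < t_m} ⊂ (−1,1) be a finite set with X ∩ [x_n, 1] ≠ ∅ and S_k(X ∩ [x_{k+1}, 1]) = X ∩ [x_k, x_{k+1}] for all k = 0,1,…,n−1. Then for every polynomial P of degree at most 2^n − 1, ∫_{-1}^1 P(x)ρ(x)dx = (1/m)∑_{k=1}^m P(t_k). -/
/-!
Induction on `n`. Since `S₀ y = -y`, both `ρ` and `X` are symmetric, so odd moments vanish on
both sides. For an even monomial substitute `u = 2x² - 1`: it maps `(0, 1)` onto `(-1, 1)`,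
turns `x^(2i)` into `((1 + u) / 2)^i`, of degree `i ≤ 2^(n-1) - 1`, carries `2ρ` on `(0, 1)` to a
weight of `W_{n-1}` for the reflections `u ↦ 2 S_{k+1}(√((1+u)/2))² - 1`, and carries the
positive half of `X` to a node set of the same kind at level `n - 1` with half as many nodes.
-/

open Set Filter Topology MeasureTheory

/-- In the variable `x = cos θ`, `cosDouble` and `cosHalf` are `θ ↦ 2θ` and `θ ↦ θ / 2`
on `[0, π]`. -/
def cosDouble (t : ℝ) : ℝ := 2 * t ^ 2 - 1

noncomputable def cosHalf (u : ℝ) : ℝ := √((1 + u) / 2)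

theorem cosDouble_cosHalf {u : ℝ} (hu : -1 ≤ u) : cosDouble (cosHalf u) = u := by
  rw [cosDouble, cosHalf, Real.sq_sqrt (by linarith)]
  ring

theorem cosHalf_cosDouble {t : ℝ} (ht : 0 ≤ t) : cosHalf (cosDouble t) = t := by
  rw [cosHalf, cosDouble, show (1 + (2 * t ^ 2 - 1)) / 2 = t ^ 2 by ring, Real.sqrt_sq ht]

theorem cosHalf_nonneg (u : ℝ) : 0 ≤ cosHalf u := Real.sqrt_nonneg _

theorem cosHalf_pos {u : ℝ} (hu : -1 < u) : 0 < cosHalf u := Real.sqrt_pos.2 (by linarith)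

theorem cosHalf_one : cosHalf 1 = 1 := by norm_num [cosHalf]

theorem cosDouble_zero : cosDouble 0 = -1 := by norm_num [cosDouble]

theorem cosDouble_one : cosDouble 1 = 1 := by norm_num [cosDouble]

theorem neg_one_le_cosDouble (t : ℝ) : -1 ≤ cosDouble t := by
  simp only [cosDouble]
  nlinarith [sq_nonneg t]

theorem strictMonoOn_cosDouble : StrictMonoOn cosDouble (Ici 0) := fun a ha _ _ hab => by
  simp only [cosDouble]
  nlinarith [mem_Ici.1 ha]

theorem strictMonoOn_cosHalf : StrictMonoOn cosHalf (Ici (-1)) := fun _ ha _ _ hab =>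
  Real.sqrt_lt_sqrt (by linarith [mem_Ici.1 ha]) (by linarith)

theorem continuous_cosDouble : Continuous cosDouble := by
  unfold cosDouble
  fun_prop

theorem hasDerivAt_cosDouble (t : ℝ) : HasDerivAt cosDouble (4 * t) t :=
  (((hasDerivAt_pow 2 t).const_mul 2).sub_const 1).congr_deriv (by norm_num; ring)

theorem hasDerivAt_cosHalf {u : ℝ} (hu : -1 < u) :
    HasDerivAt cosHalf (1 / (4 * cosHalf u)) u :=
  ((((hasDerivAt_id u).const_add 1).div_const 2).sqrt (by simp; linarith)).congr_deriv
    (by simp only [cosHalf, id]; ring)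

theorem image_cosDouble_Icc {a b : ℝ} (ha : 0 ≤ a) (hab : a ≤ b) :
    cosDouble '' Icc a b = Icc (cosDouble a) (cosDouble b) :=
  continuous_cosDouble.continuousOn.image_Icc_of_monotoneOn hab <|
    (strictMonoOn_cosDouble.mono fun _ hx => ha.trans hx.1).monotoneOn

theorem bijOn_cosDouble_Icc {a b : ℝ} (ha : 0 ≤ a) (hab : a ≤ b) :
    BijOn cosDouble (Icc a b) (Icc (cosDouble a) (cosDouble b)) :=
  image_cosDouble_Icc ha hab ▸
    (strictMonoOn_cosDouble.mono fun _ hx => ha.trans hx.1).injOn.bijOn_image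

theorem bijOn_cosHalf_Icc {a b : ℝ} (ha : 0 ≤ a) (hab : a ≤ b) :
    BijOn cosHalf (Icc (cosDouble a) (cosDouble b)) (Icc a b) :=
  (bijOn_cosDouble_Icc ha hab).symm
    ⟨fun _ hu => cosDouble_cosHalf ((neg_one_le_cosDouble a).trans hu.1),
      fun _ ht => cosHalf_cosDouble (ha.trans ht.1)⟩

theorem xseq_one : xseq 1 = 0 := by norm_num [xseq, cosHalf]

theorem neg_one_le_xseq (k : ℕ) : -1 ≤ xseq k := by
  cases k with
  | zero => exact le_rfl
  | succ k => exact (by norm_num : (-1 : ℝ) ≤ 0).trans (cosHalf_nonneg _)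

theorem xseq_succ_nonneg (k : ℕ) : 0 ≤ xseq (k + 1) := cosHalf_nonneg _

theorem xseq_lt_one (k : ℕ) : xseq k < 1 := by
  induction k with
  | zero => norm_num [xseq]
  | succ k ih => exact cosHalf_one ▸ strictMonoOn_cosHalf (neg_one_le_xseq k) (by simp) ih

theorem cosDouble_xseq_succ (k : ℕ) : cosDouble (xseq (k + 1)) = xseq k :=
  cosDouble_cosHalf (neg_one_le_xseq k)

theorem xseq_le_xseq_succ (k : ℕ) : xseq k ≤ xseq (k + 1) := by
  have h := cosDouble_xseq_succ k
  rw [cosDouble] at h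
  nlinarith [xseq_succ_nonneg k, xseq_lt_one (k + 1)]

theorem Q_succ_apply (k : ℕ) (t : ℝ) : Q (k + 1) t = Q k (cosDouble t) :=
  Function.iterate_succ_apply _ k t

theorem Q_xseq (k : ℕ) : Q k (xseq k) = -1 := by
  induction k with
  | zero => rfl
  | succ k ih => rw [Q_succ_apply, cosDouble_xseq_succ, ih]

theorem Q_one (k : ℕ) : Q k 1 = 1 := by
  induction k with
  | zero => rfl
  | succ k ih => rw [Q_succ_apply, cosDouble_one, ih]

theorem strictMonoOn_Q (k : ℕ) : StrictMonoOn (Q k) (Icc (xseq k) 1) := by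
  induction k with
  | zero => exact strictMono_id.strictMonoOn _
  | succ k ih =>
    have hmaps := (bijOn_cosDouble_Icc (xseq_succ_nonneg k) (xseq_lt_one (k + 1)).le).mapsTo
    rw [cosDouble_xseq_succ, cosDouble_one] at hmaps
    have hQ : Q (k + 1) = Q k ∘ cosDouble := funext (Q_succ_apply k)
    exact hQ ▸ ih.comp (strictMonoOn_cosDouble.mono fun _ ht => (xseq_succ_nonneg k).trans ht.1)
      hmaps

theorem IsReflection.apply_ne_xseq {k : ℕ} {S : ℝ → ℝ} (hS : IsReflection k S) {y : ℝ}
    (hy : y ∈ Ico (xseq (k + 1)) 1) : S y ≠ xseq k := by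
  intro hSy
  have hQy : Q k y = Q k 1 := by
    have h := hS.2 y ⟨hy.1, hy.2.le⟩
    rw [hSy, Q_xseq] at h
    rw [Q_one]
    linarith
  exact hy.2.ne ((strictMonoOn_Q k).injOn ⟨(xseq_le_xseq_succ k).trans hy.1, hy.2.le⟩
    ⟨(xseq_lt_one k).le, le_rfl⟩ hQy)

theorem IsReflection.zero_apply {S : ℝ → ℝ} (hS : IsReflection 0 S) {y : ℝ}
    (hy : y ∈ Icc (0 : ℝ) 1) : S y = -y :=
  hS.2 y (xseq_one ▸ hy)

noncomputable def foldRefl (S : ℕ → ℝ → ℝ) (k : ℕ) : ℝ → ℝ := cosDouble ∘ S (k + 1) ∘ cosHalf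

theorem isReflection_foldRefl {S : ℕ → ℝ → ℝ} {k : ℕ} (hS : IsReflection (k + 1) (S (k + 1))) :
    IsReflection k (foldRefl S k) := by
  have h0 := xseq_succ_nonneg k
  have h1 := xseq_succ_nonneg (k + 1)
  refine ⟨?_, fun u hu => ?_⟩
  · have hhalf := bijOn_cosHalf_Icc h1 (xseq_lt_one (k + 2)).le
    have hdouble := bijOn_cosDouble_Icc h0 (xseq_le_xseq_succ (k + 1))
    rw [cosDouble_xseq_succ, cosDouble_one] at hhalf
    rw [cosDouble_xseq_succ, cosDouble_xseq_succ] at hdouble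
    exact hdouble.comp (hS.1.comp hhalf)
  · have hu' : -1 ≤ u := (neg_one_le_xseq _).trans hu.1
    have hy : cosHalf u ∈ Icc (xseq (k + 2)) 1 :=
      ⟨strictMonoOn_cosHalf.monotoneOn (neg_one_le_xseq _) hu' hu.1,
        cosHalf_one ▸ strictMonoOn_cosHalf.monotoneOn hu' (by simp) hu.2⟩
    simp only [foldRefl, Function.comp_apply]
    rw [← Q_succ_apply, hS.2 _ hy, Q_succ_apply, cosDouble_cosHalf hu']

theorem memW.intervalIntegrable {S : ℕ → ℝ → ℝ} {n : ℕ} {ρ : ℝ → ℝ} (hρ : memW S n ρ) :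
    IntervalIntegrable ρ volume (-1) 1 :=
  intervalIntegral.intervalIntegrable_of_integral_ne_zero (by rw [hρ.2.1]; exact one_ne_zero)

theorem memW.apply_neg {S : ℕ → ℝ → ℝ} {n : ℕ} {ρ : ℝ → ℝ} (hρ : memW S n ρ) (hn : 0 < n)
    (hS : IsReflection 0 (S 0)) {y : ℝ} (hy : y ∈ Ioo (0 : ℝ) 1) : ρ (-y) = ρ y := by
  have hS_nhds : S 0 =ᶠ[𝓝 y] Neg.neg := by
    filter_upwards [Ioo_mem_nhds hy.1 hy.2] with t ht using hS.zero_apply ⟨ht.1.le, ht.2.le⟩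
  rw [hρ.2.2 0 hn y (xseq_one ▸ hy), hS_nhds.deriv_eq, deriv_neg,
    hS.zero_apply ⟨hy.1.le, hy.2.le⟩]
  ring

section EvenWeight

variable {ρ : ℝ → ℝ} (hρ : IntervalIntegrable ρ volume (-1) 1)
  (heven : ∀ y ∈ Ioo (0 : ℝ) 1, ρ (-y) = ρ y)
include hρ heven

theorem integral_mul_eq_integral_add_comp_neg {f : ℝ → ℝ} (hf : Continuous f) :
    ∫ x in (-1 : ℝ)..1, f x * ρ x = ∫ x in (0 : ℝ)..1, (f x + f (-x)) * ρ x := by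
  have hsub : ∀ {g : ℝ → ℝ} {a b : ℝ}, IntervalIntegrable g volume (-1) 1 → -1 ≤ a → a ≤ b →
      b ≤ 1 → IntervalIntegrable g volume a b := fun hg ha hab hb =>
    hg.mono_set (by rw [uIcc_of_le hab, uIcc_of_le (by norm_num)]; exact Icc_subset_Icc ha hb)
  have hfρ := hρ.continuousOn_mul hf.continuousOn
  have hρ₀₁ : IntervalIntegrable ρ volume 0 1 := hsub hρ (by norm_num) zero_le_one le_rfl
  have hneg : ∫ x in (-1 : ℝ)..0, f x * ρ x = ∫ x in (0 : ℝ)..1, f (-x) * ρ x := by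
    have h := intervalIntegral.integral_comp_neg (a := 0) (b := 1) (fun x => f x * ρ x)
    rw [neg_zero] at h
    rw [← h]
    exact intervalIntegral.integral_congr_Ioo_of_le zero_le_one fun x hx => by
      simp only [heven x hx]
  rw [← intervalIntegral.integral_add_adjacent_intervals
      (hsub hfρ le_rfl (by norm_num) (by norm_num)) (hsub hfρ (by norm_num) zero_le_one le_rfl),
    hneg, add_comm,
    ← intervalIntegral.integral_add (hρ₀₁.continuousOn_mul hf.continuousOn)
      (hρ₀₁.continuousOn_mul (g := fun x => f (-x)) (by fun_prop))]
  simp only [add_mul]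

theorem integral_mul_eq_two_mul_of_even {f : ℝ → ℝ} (hf : Continuous f) (hfe : ∀ x, f (-x) = f x) :
    ∫ x in (-1 : ℝ)..1, f x * ρ x = 2 * ∫ x in (0 : ℝ)..1, f x * ρ x := by
  rw [integral_mul_eq_integral_add_comp_neg hρ heven hf, ← intervalIntegral.integral_const_mul]
  simp only [hfe]
  ring_nf

theorem integral_mul_eq_zero_of_odd {f : ℝ → ℝ} (hf : Continuous f) (hfo : ∀ x, f (-x) = -f x) :
    ∫ x in (-1 : ℝ)..1, f x * ρ x = 0 := by
  simp [integral_mul_eq_integral_add_comp_neg hρ heven hf, hfo]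

end EvenWeight

theorem integral_comp_cosDouble_mul (g : ℝ → ℝ) :
    ∫ x in (0 : ℝ)..1, g (cosDouble x) * (4 * x) = ∫ u in (-1 : ℝ)..1, g u := by
  have h := intervalIntegral.integral_comp_mul_deriv_of_deriv_nonneg (a := 0) (b := 1) (g := g)
    continuous_cosDouble.continuousOn (fun x _ => hasDerivAt_cosDouble x)
    (fun x hx => by rw [min_eq_left zero_le_one] at hx; linarith [hx.1])
  rwa [cosDouble_zero, cosDouble_one] at h

/-- The density of the image of `2 ρ(x) dx` on `(0, 1)` under `cosDouble`. -/
noncomputable def foldWeight (ρ : ℝ → ℝ) (u : ℝ) : ℝ := ρ (cosHalf u) / (2 * cosHalf u)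

theorem integral_mul_foldWeight (ρ g : ℝ → ℝ) :
    ∫ u in (-1 : ℝ)..1, g u * foldWeight ρ u = 2 * ∫ x in (0 : ℝ)..1, g (cosDouble x) * ρ x := by
  rw [← integral_comp_cosDouble_mul, ← intervalIntegral.integral_const_mul]
  refine intervalIntegral.integral_congr_Ioo_of_le zero_le_one fun x hx => ?_
  simp only [foldWeight, cosHalf_cosDouble hx.1.le]
  field_simp [hx.1.ne']
  ring

/-- Since `f` is recovered from `β ∘ f ∘ α` near `α u`, this chain rule also holds when `f` is
not differentiable at `α u`: both sides are then `0`. -/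
theorem deriv_comp_comp_of_eventuallyEq {f α β γ δ : ℝ → ℝ} {u α' β' : ℝ}
    (hα : HasDerivAt α α' u) (hβ : HasDerivAt β β' (f (α u)))
    (hγ : DifferentiableAt ℝ γ (β (f (α u)))) (hδ : DifferentiableAt ℝ δ (α u))
    (hδα : δ (α u) = u) (hf : f =ᶠ[𝓝 (α u)] γ ∘ (β ∘ f ∘ α) ∘ δ) :
    deriv (β ∘ f ∘ α) u = β' * deriv f (α u) * α' := by
  by_cases hfd : DifferentiableAt ℝ f (α u)
  · rw [(hβ.comp u (hfd.hasDerivAt.comp u hα)).deriv, mul_assoc]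
  · have : ¬ DifferentiableAt ℝ (β ∘ f ∘ α) u := fun h => by
      rw [← hδα] at h
      refine hfd (hf.differentiableAt_iff.2 (DifferentiableAt.comp _ ?_ (h.comp _ hδ)))
      simpa only [Function.comp_apply, hδα] using hγ
    rw [deriv_zero_of_not_differentiableAt this, deriv_zero_of_not_differentiableAt hfd]
    ring

theorem foldWeight_eq_neg_mul_deriv {S : ℕ → ℝ → ℝ} {ρ : ℝ → ℝ} {k : ℕ}
    (hS : IsReflection (k + 1) (S (k + 1)))
    (hρ : ∀ y ∈ Ioo (xseq (k + 2)) 1, ρ y = -(ρ (S (k + 1) y) * deriv (S (k + 1)) y))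
    {u : ℝ} (hu : u ∈ Ioo (xseq (k + 1)) 1) :
    foldWeight ρ u = -(foldWeight ρ (foldRefl S k u) * deriv (foldRefl S k) u) := by
  have hu₁ : -1 < u := (neg_one_le_xseq _).trans_lt hu.1
  set y := cosHalf u with hy_def
  have hy : y ∈ Ioo (xseq (k + 2)) 1 :=
    ⟨strictMonoOn_cosHalf (neg_one_le_xseq _) hu₁.le hu.1,
      cosHalf_one ▸ strictMonoOn_cosHalf hu₁.le (by simp) hu.2⟩
  have hy₀ : 0 < y := (xseq_succ_nonneg _).trans_lt hy.1
  set s := S (k + 1) y with hs_def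
  have hs : s ∈ Icc (xseq (k + 1)) (xseq (k + 2)) := hS.1.mapsTo ⟨hy.1.le, hy.2.le⟩
  have hs₀ : 0 < s :=
    (xseq_succ_nonneg k).trans_lt (hs.1.lt_of_ne (hS.apply_ne_xseq ⟨hy.1.le, hy.2⟩).symm)
  have hS_nhds : S (k + 1) =ᶠ[𝓝 y] cosHalf ∘ foldRefl S k ∘ cosDouble := by
    filter_upwards [Ioo_mem_nhds hy.1 hy.2] with t ht
    have ht₀ : 0 ≤ t := (xseq_succ_nonneg _).trans ht.1.le
    have hSt : 0 ≤ S (k + 1) t :=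
      (xseq_succ_nonneg k).trans (hS.1.mapsTo ⟨ht.1.le, ht.2.le⟩).1
    simp only [foldRefl, Function.comp_apply, cosHalf_cosDouble ht₀, cosHalf_cosDouble hSt]
  have hderiv : deriv (foldRefl S k) u = 4 * s * deriv (S (k + 1)) y * (1 / (4 * y)) :=
    deriv_comp_comp_of_eventuallyEq (hasDerivAt_cosHalf hu₁) (hasDerivAt_cosDouble s)
      (hasDerivAt_cosHalf (by simp only [cosDouble]; nlinarith)).differentiableAt
      (hasDerivAt_cosDouble _).differentiableAt (cosDouble_cosHalf hu₁.le) hS_nhds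
  have hfold : foldWeight ρ (foldRefl S k u) = ρ s / (2 * s) := by
    simp only [foldWeight, foldRefl, Function.comp_apply, ← hy_def, ← hs_def,
      cosHalf_cosDouble hs₀.le]
  rw [hfold, hderiv, show foldWeight ρ u = ρ y / (2 * y) from rfl, hρ y hy, ← hs_def]
  field_simp

theorem memW_foldWeight {S : ℕ → ℝ → ℝ} {n : ℕ} {ρ : ℝ → ℝ}
    (hS : ∀ k < n + 1, IsReflection k (S k)) (hρ : memW S (n + 1) ρ) :
    memW (foldRefl S) n (foldWeight ρ) := by
  refine ⟨fun u hu => ?_, ?_, fun k hk u hu => foldWeight_eq_neg_mul_deriv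
    (hS (k + 1) (by omega)) (hρ.2.2 (k + 1) (by omega)) hu⟩
  · have hy₀ := cosHalf_pos hu.1
    have hy₁ : cosHalf u < 1 := cosHalf_one ▸ strictMonoOn_cosHalf hu.1.le (by simp) hu.2
    exact div_nonneg (hρ.1 _ ⟨by linarith, hy₁⟩) (by positivity)
  · have h := integral_mul_foldWeight ρ fun _ => 1
    have heven := integral_mul_eq_two_mul_of_even (f := fun _ => 1) hρ.intervalIntegrable
      (fun y hy => hρ.apply_neg (by omega) (hS 0 (by omega)) hy) continuous_const fun _ => rfl
    simp only [one_mul] at h heven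
    rw [h, ← heven, hρ.2.1]

structure IsNodeSet (n : ℕ) (S : ℕ → ℝ → ℝ) (X : Finset ℝ) : Prop where
  subset_Ioo : (X : Set ℝ) ⊆ Ioo (-1) 1
  exists_mem_Icc : ∃ x ∈ X, x ∈ Icc (xseq n) 1
  image_eq : ∀ k < n,
    S k '' ((X : Set ℝ) ∩ Icc (xseq (k + 1)) 1) = (X : Set ℝ) ∩ Icc (xseq k) (xseq (k + 1))

namespace IsNodeSet

variable {n : ℕ} {S : ℕ → ℝ → ℝ} {X : Finset ℝ}

theorem nonempty (hX : IsNodeSet n S X) : X.Nonempty :=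
  let ⟨x, hx, _⟩ := hX.exists_mem_Icc
  ⟨x, hx⟩

theorem neg_mem (hX : IsNodeSet n S X) (hn : 0 < n) (hS : IsReflection 0 (S 0)) {t : ℝ}
    (ht : t ∈ X) : -t ∈ X := by
  have himage := hX.image_eq 0 hn
  rw [zero_add, xseq_one] at himage
  rcases le_or_gt 0 t with ht₀ | ht₀
  · have hmem : t ∈ (X : Set ℝ) ∩ Icc 0 1 := ⟨ht, ht₀, (hX.subset_Ioo ht).2.le⟩
    have := himage ▸ mem_image_of_mem (S 0) hmem
    exact hS.zero_apply hmem.2 ▸ this.1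
  · obtain ⟨s, hs, hst⟩ : t ∈ S 0 '' ((X : Set ℝ) ∩ Icc 0 1) :=
      himage ▸ ⟨ht, (hX.subset_Ioo ht).1.le, ht₀.le⟩
    rw [hS.zero_apply hs.2] at hst
    exact hst ▸ (neg_neg s).symm ▸ hs.1

theorem zero_notMem (hX : IsNodeSet n S X) (hn : 1 < n) (hS : IsReflection 1 (S 1)) :
    (0 : ℝ) ∉ X := by
  intro h0
  obtain ⟨y, hy, hy₀⟩ : (0 : ℝ) ∈ S 1 '' ((X : Set ℝ) ∩ Icc (xseq 2) 1) :=
    hX.image_eq 1 hn ▸ ⟨h0, xseq_one ▸ le_rfl, xseq_one ▸ xseq_succ_nonneg 1⟩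
  exact hS.apply_ne_xseq ⟨hy.2.1, (hX.subset_Ioo hy.1).2⟩ (hy₀.trans xseq_one.symm)

end IsNodeSet

theorem sum_eq_two_mul_sum_filter_pos {X : Finset ℝ} (hneg : ∀ t ∈ X, -t ∈ X) (h0 : (0 : ℝ) ∉ X)
    {f : ℝ → ℝ} (hf : ∀ t, f (-t) = f t) :
    ∑ t ∈ X, f t = 2 * ∑ t ∈ X.filter (0 < ·), f t := by
  rw [← Finset.sum_filter_add_sum_filter_not X (0 < ·), two_mul]
  congr 1
  refine Finset.sum_nbij' (fun t => -t) (fun t => -t) ?_ ?_ (by simp) (by simp) (by simp [hf])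
  · intro t ht
    simp only [Finset.mem_filter] at ht ⊢
    exact ⟨hneg t ht.1, neg_pos.2 (lt_of_le_of_ne (not_lt.1 ht.2) fun h => h0 (h ▸ ht.1))⟩
  · intro t ht
    simp only [Finset.mem_filter] at ht ⊢
    exact ⟨hneg t ht.1, by linarith⟩

theorem sum_pow_eq_zero_of_odd {X : Finset ℝ} (hneg : ∀ t ∈ X, -t ∈ X) {j : ℕ} (hj : Odd j) :
    ∑ t ∈ X, t ^ j = 0 := by
  have h : ∑ t ∈ X, t ^ j = ∑ t ∈ X, (-t) ^ j :=
    Finset.sum_nbij' (fun t => -t) (fun t => -t) (fun t ht => hneg t ht) (fun t ht => hneg t ht)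
      (by simp) (by simp) (by simp)
  simp only [hj.neg_pow, Finset.sum_neg_distrib] at h
  linarith

noncomputable def foldNodes (X : Finset ℝ) : Finset ℝ := (X.filter (0 < ·)).image cosDouble

theorem coe_foldNodes_inter_Icc {X : Finset ℝ} (h0 : (0 : ℝ) ∉ X) {a b : ℝ} (ha : 0 ≤ a)
    (hab : a ≤ b) :
    (foldNodes X : Set ℝ) ∩ Icc (cosDouble a) (cosDouble b) =
      cosDouble '' ((X : Set ℝ) ∩ Icc a b) := by
  rw [foldNodes, Finset.coe_image, ← image_cosDouble_Icc ha hab,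
    ← strictMonoOn_cosDouble.injOn.image_inter (fun t ht => (Finset.mem_filter.1 ht).2.le)
      fun t ht => ha.trans ht.1]
  congr 1
  ext t
  simp only [Finset.coe_filter, mem_inter_iff, mem_ofPred_eq, Finset.mem_coe]
  exact ⟨fun h => ⟨h.1.1, h.2⟩, fun h =>
    ⟨⟨h.1, lt_of_le_of_ne (ha.trans h.2.1) fun h' => h0 (h' ▸ h.1)⟩, h.2⟩⟩

theorem IsNodeSet.fold {n : ℕ} {S : ℕ → ℝ → ℝ} {X : Finset ℝ} (hX : IsNodeSet (n + 1) S X)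
    (h0 : (0 : ℝ) ∉ X) : IsNodeSet n (foldRefl S) (foldNodes X) where
  subset_Ioo := by
    rintro _ hu
    obtain ⟨t, ht, rfl⟩ := Finset.mem_image.1 hu
    obtain ⟨htX, ht₀⟩ := Finset.mem_filter.1 ht
    have ht₁ := (hX.subset_Ioo htX).2
    constructor <;> simp only [cosDouble] <;> nlinarith
  exists_mem_Icc := by
    have h := coe_foldNodes_inter_Icc h0 (xseq_succ_nonneg n) (xseq_lt_one (n + 1)).le
    rw [cosDouble_xseq_succ, cosDouble_one] at h
    obtain ⟨x, hx, hxI⟩ := hX.exists_mem_Icc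
    obtain ⟨hu, huI⟩ : cosDouble x ∈ (foldNodes X : Set ℝ) ∩ Icc (xseq n) 1 :=
      h ▸ mem_image_of_mem _ ⟨hx, hxI⟩
    exact ⟨cosDouble x, hu, huI⟩
  image_eq k hk := by
    have h₁ := coe_foldNodes_inter_Icc h0 (xseq_succ_nonneg (k + 1)) (xseq_lt_one (k + 2)).le
    have h₂ := coe_foldNodes_inter_Icc h0 (xseq_succ_nonneg k) (xseq_le_xseq_succ (k + 1))
    rw [cosDouble_xseq_succ, cosDouble_one] at h₁
    rw [cosDouble_xseq_succ, cosDouble_xseq_succ] at h₂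
    rw [h₁, h₂, ← hX.image_eq (k + 1) (by omega), ← image_comp, ← image_comp]
    exact image_congr fun t ht => by
      simp [foldRefl, cosHalf_cosDouble ((xseq_succ_nonneg _).trans ht.2.1)]

theorem average_foldNodes {X : Finset ℝ} (hneg : ∀ t ∈ X, -t ∈ X) (h0 : (0 : ℝ) ∉ X)
    (g : ℝ → ℝ) :
    1 / (X.card : ℝ) * ∑ t ∈ X, g (cosDouble t) =
      1 / ((foldNodes X).card : ℝ) * ∑ u ∈ foldNodes X, g u := by
  have hsum : ∀ g : ℝ → ℝ, ∑ t ∈ X, g (cosDouble t) = 2 * ∑ u ∈ foldNodes X, g u := fun g => by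
    rw [sum_eq_two_mul_sum_filter_pos hneg h0 fun t => by simp [cosDouble], foldNodes,
      Finset.sum_image fun s hs t ht => strictMonoOn_cosDouble.injOn
        (Finset.mem_filter.1 hs).2.le (Finset.mem_filter.1 ht).2.le]
  have hcard : (X.card : ℝ) = 2 * (foldNodes X).card := by simpa using hsum fun _ => 1
  rw [hsum, hcard]
  ring

def IsExactQuadrature (ρ : ℝ → ℝ) (X : Finset ℝ) (N : ℕ) : Prop :=
  ∀ P : Polynomial ℝ, P.natDegree ≤ N →
    ∫ x in (-1 : ℝ)..1, P.eval x * ρ x = 1 / (X.card : ℝ) * ∑ t ∈ X, P.eval t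

theorem isExactQuadrature_of_moments {ρ : ℝ → ℝ} {X : Finset ℝ} {N : ℕ}
    (hρ : IntervalIntegrable ρ volume (-1) 1)
    (h : ∀ j ≤ N, ∫ x in (-1 : ℝ)..1, x ^ j * ρ x = 1 / (X.card : ℝ) * ∑ t ∈ X, t ^ j) :
    IsExactQuadrature ρ X N := by
  intro P hP
  have hP' : P.natDegree < N + 1 := Nat.lt_succ_of_le hP
  have hint : ∀ j ∈ Finset.range (N + 1),
      IntervalIntegrable (fun x => P.coeff j * (x ^ j * ρ x)) volume (-1) 1 := fun j _ =>
    (hρ.continuousOn_mul (continuous_pow j).continuousOn).const_mul _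
  simp_rw [P.eval_eq_sum_range' hP', Finset.sum_mul, mul_assoc]
  rw [intervalIntegral.integral_finsetSum hint]
  simp_rw [Finset.mul_sum]
  rw [Finset.sum_comm]
  refine Finset.sum_congr rfl fun j hj => ?_
  rw [intervalIntegral.integral_const_mul, h j (Nat.lt_succ_iff.1 (Finset.mem_range.1 hj)),
    Finset.mul_sum, Finset.mul_sum]
  exact Finset.sum_congr rfl fun _ _ => by ring

theorem integral_pow_zero_mul_eq_average {ρ : ℝ → ℝ} {X : Finset ℝ}
    (hρ : ∫ x in (-1 : ℝ)..1, ρ x = 1) (hX : X.Nonempty) :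
    ∫ x in (-1 : ℝ)..1, x ^ 0 * ρ x = 1 / (X.card : ℝ) * ∑ t ∈ X, t ^ 0 := by
  simp [hρ, hX.card_ne_zero]

theorem integral_pow_two_mul_eq_average_of_fold {n i : ℕ} {S : ℕ → ℝ → ℝ} {ρ : ℝ → ℝ}
    {X : Finset ℝ} (hS : IsReflection 0 (S 0)) (hρ : memW S (n + 1) ρ)
    (hX : IsNodeSet (n + 1) S X) (h0 : (0 : ℝ) ∉ X)
    (hfold : IsExactQuadrature (foldWeight ρ) (foldNodes X) i) :
    ∫ x in (-1 : ℝ)..1, x ^ (2 * i) * ρ x = 1 / (X.card : ℝ) * ∑ t ∈ X, t ^ (2 * i) := by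
  set R : Polynomial ℝ := (Polynomial.C (1 / 2) * (Polynomial.X + 1)) ^ i
  have hR : ∀ t, R.eval (cosDouble t) = t ^ (2 * i) := fun t => by
    simp only [R, Polynomial.eval_pow, Polynomial.eval_mul, Polynomial.eval_C,
      Polynomial.eval_add, Polynomial.eval_X, Polynomial.eval_one, cosDouble, pow_mul]
    ring
  have hRdeg : R.natDegree ≤ i := by
    simp only [R]
    compute_degree
  calc ∫ x in (-1 : ℝ)..1, x ^ (2 * i) * ρ x
      = 2 * ∫ x in (0 : ℝ)..1, x ^ (2 * i) * ρ x :=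
        integral_mul_eq_two_mul_of_even hρ.intervalIntegrable
          (fun _ hy => hρ.apply_neg n.succ_pos hS hy) (continuous_pow _)
          fun x => (even_two_mul i).neg_pow x
    _ = ∫ u in (-1 : ℝ)..1, R.eval u * foldWeight ρ u := by
        simp only [integral_mul_foldWeight, hR]
    _ = 1 / ((foldNodes X).card : ℝ) * ∑ u ∈ foldNodes X, R.eval u := hfold R hRdeg
    _ = 1 / (X.card : ℝ) * ∑ t ∈ X, t ^ (2 * i) := by
        simp only [← average_foldNodes (fun t => hX.neg_mem n.succ_pos hS) h0, hR]

theorem isExactQuadrature_of_isNodeSet (n : ℕ) (S : ℕ → ℝ → ℝ)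
    (hS : ∀ k < n, IsReflection k (S k)) (ρ : ℝ → ℝ) (hρ : memW S n ρ) (X : Finset ℝ)
    (hX : IsNodeSet n S X) : IsExactQuadrature ρ X (2 ^ n - 1) := by
  induction n generalizing S ρ X with
  | zero =>
    refine isExactQuadrature_of_moments hρ.intervalIntegrable fun j hj => ?_
    obtain rfl : j = 0 := by simpa using hj
    exact integral_pow_zero_mul_eq_average hρ.2.1 hX.nonempty
  | succ n ih =>
    have hS₀ := hS 0 n.succ_pos
    refine isExactQuadrature_of_moments hρ.intervalIntegrable fun j hj => ?_
    obtain ⟨i, rfl | rfl⟩ := j.even_or_odd'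
    · rcases i.eq_zero_or_pos with rfl | hi
      · exact integral_pow_zero_mul_eq_average hρ.2.1 hX.nonempty
      have hin : i ≤ 2 ^ n - 1 := by rw [pow_succ] at hj; omega
      have hn : 1 < n + 1 := by
        rcases n with _ | n
        · simp at hin; omega
        · omega
      have h0 := hX.zero_notMem hn (hS 1 hn)
      refine integral_pow_two_mul_eq_average_of_fold hS₀ hρ hX h0 fun P hP => ?_
      exact ih (foldRefl S) (fun k hk => isReflection_foldRefl (hS (k + 1) (by omega)))
        (foldWeight ρ) (memW_foldWeight hS hρ) (foldNodes X) (hX.fold h0) P (hP.trans hin)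
    · rw [integral_mul_eq_zero_of_odd hρ.intervalIntegrable
          (fun _ hy => hρ.apply_neg n.succ_pos hS₀ hy) (continuous_pow _)
          fun x => (odd_two_mul_add_one i).neg_pow x,
        sum_pow_eq_zero_of_odd (fun t => hX.neg_mem n.succ_pos hS₀) (odd_two_mul_add_one i),
        mul_zero]

theorem main_quadrature_general (n : ℕ) (S : ℕ → ℝ → ℝ)
    (hS : ∀ k < n, IsReflection k (S k)) (ρ : ℝ → ℝ) (hρ : memW S n ρ)
    (X : Finset ℝ) (hX1 : (X : Set ℝ) ⊆ Set.Ioo (-1 : ℝ) 1)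
    (hX2 : ∃ x ∈ X, x ∈ Set.Icc (xseq n) 1)
    (hX3 : ∀ k < n,
      S k '' ((X : Set ℝ) ∩ Set.Icc (xseq (k + 1)) 1)
        = (X : Set ℝ) ∩ Set.Icc (xseq k) (xseq (k + 1)))
    (P : Polynomial ℝ) (hP : P.natDegree ≤ 2 ^ n - 1) :
    (∫ x in (-1 : ℝ)..1, P.eval x * ρ x) = (1 / (X.card : ℝ)) * ∑ x ∈ X, P.eval x :=
  isExactQuadrature_of_isNodeSet n S hS ρ hρ X ⟨hX1, hX2, hX3⟩ P hP

/-- Main quadrature theorem: for `ρ ∈ W_n` and a node set `X ⊂ (-1,1)` with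
`X ∩ [x_n,1] ≠ ∅` and `S_k(X ∩ [x_{k+1},1]) = X ∩ [x_k, x_{k+1}]` for `k < n`,
the equal-weight quadrature on `X` is exact on polynomials of degree `≤ 2^n - 1`. -/
theorem main_quadrature (n : ℕ) (hn : 1 ≤ n) (S : ℕ → ℝ → ℝ)
    (hS : ∀ k < n, IsReflection k (S k)) (ρ : ℝ → ℝ) (hρ : memW S n ρ)
    (X : Finset ℝ) (hX1 : (X : Set ℝ) ⊆ Set.Ioo (-1 : ℝ) 1)
    (hX2 : ∃ x ∈ X, x ∈ Set.Icc (xseq n) 1)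
    (hX3 : ∀ k < n,
      S k '' ((X : Set ℝ) ∩ Set.Icc (xseq (k + 1)) 1)
        = (X : Set ℝ) ∩ Set.Icc (xseq k) (xseq (k + 1)))
    (P : Polynomial ℝ) (hP : P.natDegree ≤ 2 ^ n - 1) :
    (∫ x in (-1 : ℝ)..1, P.eval x * ρ x) = (1 / (X.card : ℝ)) * ∑ x ∈ X, P.eval x :=
  main_quadrature_general n S hS ρ hρ X hX1 hX2 hX3 P hP
end
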